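/- If the CFL-type condition Δt/h^α ≤ 1/(2 ε C_α (1 + 1/α − ζ(α−1))) holds, then for every integer j with |j| < J, the diagonal coefficient of the explicit Euler natural scheme is nonnegative: 1 + 2Δt ε C_α ζ(α−1) h^{−α} − Δt ε C_α h Σ''_{k=−J−j, k≠0}^{J−j} 1/|kh|^{1+α} ≥ 0. -/

import Mathlib

open scoped BigOperators

/-- The constant `C_α = α Γ((1+α)/2) / (2^{1-α} √π Γ(1-α/2))`. -/
noncomputable def Cconst (α : ℝ) : ℝ :=
  α * Real.Gamma ((1 + α) / 2) /
    ((2 : ℝ) ^ (1 - α) * Real.sqrt Real.pi * Real.Gamma (1 - α / 2))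

/-- The real value of the Riemann zeta function at a real argument. -/
noncomputable def zetaR (s : ℝ) : ℝ := (riemannZeta (s : ℂ)).re

/-- The double-primed sum `Σ''_{k=a, k≠0}^{b} g(k)`: the sum over integers `a ≤ k ≤ b`,
omitting `k = 0`, where the end terms `k = a` and `k = b` carry weight `1/2`. -/
noncomputable def dsum (a b : ℤ) (g : ℤ → ℝ) : ℝ :=
  ∑ k ∈ (Finset.Icc a b).erase 0, (if k = a ∨ k = b then (1 : ℝ) / 2 else 1) * g k

open Finset Real

/-! Every weight of the double-primed sum is at most `1`, and comparing `∑_{n ≥ 2} n^{-1-α}` with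
`∫_1^∞ x^{-1-α} dx = 1/α` gives `∑_{k ≠ 0} |k|^{-1-α} ≤ 2 (1 + 1/α)`. Hence the sum term is at most
`2 Δt ε C_α (1 + 1/α) h^{-α}`, so the diagonal coefficient is at least
`1 - 2 Δt ε C_α (1 + 1/α - ζ(α-1)) h^{-α}`, which the CFL condition makes nonnegative. -/

lemma sum_range_rpow_neg_le {α : ℝ} (hα : 0 < α) (N : ℕ) :
    ∑ n ∈ range N, (n : ℝ) ^ (-(1 + α)) ≤ 1 + 1 / α := by
  set f : ℝ → ℝ := fun x ↦ x ^ (-(1 + α))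
  have hf_nonneg : ∀ n : ℕ, 0 ≤ f n := fun n ↦ rpow_nonneg n.cast_nonneg _
  have tail : ∑ i ∈ range N, f (1 + ↑(i + 1)) ≤ 1 / α := by
    have hanti : AntitoneOn f (Set.Icc 1 (1 + N)) :=
      (antitoneOn_rpow_Ioi_of_exponent_nonpos (by linarith)).mono
        fun x hx ↦ lt_of_lt_of_le one_pos hx.1
    have hint : ∫ x in (1 : ℝ)..1 + N, f x = (1 - (1 + N : ℝ) ^ (-α)) / α := by
      rw [integral_rpow (Or.inr ⟨by linarith, by simp⟩)]
      rw [show -(1 + α) + 1 = -α by ring, one_rpow]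
      field_simp
      ring
    have : 0 ≤ (1 + N : ℝ) ^ (-α) := by positivity
    calc ∑ i ∈ range N, f (1 + ↑(i + 1)) ≤ ∫ x in (1 : ℝ)..1 + N, f x := hanti.sum_le_integral
      _ ≤ 1 / α := by rw [hint]; gcongr; linarith
  have hzero : f 0 = 0 := zero_rpow (by linarith)
  have hone : f 1 = 1 := one_rpow _
  calc ∑ n ∈ range N, f n ≤ ∑ n ∈ range (N + 2), f n :=
        sum_le_sum_of_subset_of_nonneg (range_mono (by omega)) fun n _ _ ↦ hf_nonneg n
    _ = ∑ i ∈ range N, f (1 + ↑(i + 1)) + f 1 + f 0 := by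
        rw [sum_range_succ', sum_range_succ']
        push_cast
        ring_nf
    _ ≤ 1 + 1 / α := by linarith

-- `t` may contain `0`, whose term is `0 ^ (-(1 + α)) = 0` in Lean.
lemma sum_natCast_rpow_neg_le {α : ℝ} (hα : 0 < α) (t : Finset ℕ) :
    ∑ n ∈ t, (n : ℝ) ^ (-(1 + α)) ≤ 1 + 1 / α :=
  (sum_le_sum_of_subset_of_nonneg t.subset_range_sup_succ
    fun n _ _ ↦ rpow_nonneg n.cast_nonneg _).trans (sum_range_rpow_neg_le hα _)

lemma sum_comp_natAbs_le {f : ℕ → ℝ} (hf : ∀ n, 0 ≤ f n) (s : Finset ℤ) :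
    ∑ k ∈ s, f k.natAbs ≤ 2 * ∑ n ∈ s.image Int.natAbs, f n := by
  rw [sum_comp, mul_sum]
  refine sum_le_sum fun n _ ↦ ?_
  have hfiber : #{k ∈ s | k.natAbs = n} ≤ 2 :=
    calc #{k ∈ s | k.natAbs = n} ≤ #({(n : ℤ), -(n : ℤ)} : Finset ℤ) :=
          card_le_card fun k hk ↦ by
            simp only [mem_filter] at hk
            simp only [mem_insert, mem_singleton]
            omega
      _ ≤ 2 := card_le_two
  rw [nsmul_eq_mul]
  exact mul_le_mul_of_nonneg_right (by exact_mod_cast hfiber) (hf n)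

lemma sum_abs_intCast_rpow_neg_le {α : ℝ} (hα : 0 < α) (s : Finset ℤ) :
    ∑ k ∈ s, |(k : ℝ)| ^ (-(1 + α)) ≤ 2 * (1 + 1 / α) := by
  have := sum_comp_natAbs_le (f := fun n : ℕ ↦ (n : ℝ) ^ (-(1 + α)))
    (fun n ↦ rpow_nonneg n.cast_nonneg _) s
  simp only [Nat.cast_natAbs, Int.cast_abs] at this
  linarith [sum_natCast_rpow_neg_le hα (s.image Int.natAbs)]

lemma dsum_le_sum {a b : ℤ} {g : ℤ → ℝ} (hg : ∀ k, 0 ≤ g k) :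
    dsum a b g ≤ ∑ k ∈ (Icc a b).erase 0, g k :=
  sum_le_sum fun k _ ↦ mul_le_of_le_one_left (hg k) (by split_ifs <;> norm_num)

lemma mul_dsum_inv_abs_mul_rpow_le {α h : ℝ} (hα : 0 < α) (hh : 0 < h) (a b : ℤ) :
    h * dsum a b (fun k ↦ 1 / |(k : ℝ) * h| ^ (1 + α)) ≤ 2 * (1 + 1 / α) * h ^ (-α) := by
  have hkernel (k : ℤ) :
      1 / |(k : ℝ) * h| ^ (1 + α) = h ^ (-(1 + α)) * |(k : ℝ)| ^ (-(1 + α)) := by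
    rw [abs_mul, abs_of_pos hh, mul_rpow (abs_nonneg _) hh.le, one_div, mul_inv,
      ← rpow_neg (abs_nonneg _), ← rpow_neg hh.le, mul_comm]
  have hsum : dsum a b (fun k ↦ 1 / |(k : ℝ) * h| ^ (1 + α)) ≤
      h ^ (-(1 + α)) * ∑ k ∈ (Icc a b).erase 0, |(k : ℝ)| ^ (-(1 + α)) := by
    rw [mul_sum]
    exact (dsum_le_sum fun k ↦ by positivity).trans_eq (sum_congr rfl fun k _ ↦ hkernel k)
  have hpow : h * h ^ (-(1 + α)) = h ^ (-α) := by
    rw [← rpow_one_add' hh.le (by linarith)]; ring_nf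
  calc h * dsum a b _
      ≤ h * (h ^ (-(1 + α)) * ∑ k ∈ (Icc a b).erase 0, |(k : ℝ)| ^ (-(1 + α))) := by gcongr
    _ ≤ h * (h ^ (-(1 + α)) * (2 * (1 + 1 / α))) := by
        gcongr; exact sum_abs_intCast_rpow_neg_le hα _
    _ = 2 * (1 + 1 / α) * h ^ (-α) := by rw [← hpow]; ring

lemma Cconst_nonneg {α : ℝ} (hα : 0 ≤ α) (hα2 : α < 2) : 0 ≤ Cconst α :=
  div_nonneg (mul_nonneg hα (Gamma_nonneg_of_nonneg (by linarith)))
    (mul_nonneg (by positivity) (Gamma_nonneg_of_nonneg (by linarith)))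

lemma mul_le_one_of_le_one_div {c x : ℝ} (hx : 0 ≤ x) (h : x ≤ 1 / c) : c * x ≤ 1 := by
  rcases le_or_gt c 0 with hc | hc
  · exact (mul_nonpos_of_nonpos_of_nonneg hc hx).trans zero_le_one
  · exact (le_div_iff₀' hc).mp h

theorem stmt_8_general (α ε h Δt : ℝ) (J : ℤ)
    (hα : 0 < α) (hα2 : α < 2) (hε : 0 < ε)
    (hh : 0 < h) (hΔt : 0 < Δt)
    (hCFL : Δt / h ^ α ≤ 1 / (2 * ε * Cconst α * (1 + 1 / α - zetaR (α - 1)))) :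
    ∀ j : ℤ, |j| < J →
      0 ≤ 1 + 2 * Δt * ε * Cconst α * zetaR (α - 1) * h ^ (-α)
          - Δt * ε * Cconst α * h *
              dsum (-J - j) (J - j) (fun k => 1 / |(k : ℝ) * h| ^ (1 + α)) := by
  intro j _
  have hC := Cconst_nonneg hα.le hα2
  have hsum := mul_le_mul_of_nonneg_left (mul_dsum_inv_abs_mul_rpow_le hα hh (-J - j) (J - j))
    (by positivity : 0 ≤ Δt * ε * Cconst α)
  rw [div_eq_mul_inv, ← rpow_neg hh.le] at hCFL
  have hstep := mul_le_one_of_le_one_div (by positivity) hCFL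
  linarith

/-- Nonnegativity of the diagonal coefficient of the explicit Euler natural scheme
under the CFL-type condition. -/
theorem stmt_8 (α ε h Δt : ℝ) (J : ℤ)
    (hα : 0 < α) (hα2 : α < 2) (hε : 0 < ε) (hJ : 1 ≤ J)
    (hh : 0 < h) (hΔt : 0 < Δt)
    (hCFL : Δt / h ^ α ≤ 1 / (2 * ε * Cconst α * (1 + 1 / α - zetaR (α - 1)))) :
    ∀ j : ℤ, |j| < J →
      0 ≤ 1 + 2 * Δt * ε * Cconst α * zetaR (α - 1) * h ^ (-α)
          - Δt * ε * Cconst α * h *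
              dsum (-J - j) (J - j) (fun k => 1 / |(k : ℝ) * h| ^ (1 + α)) :=
  stmt_8_general α ε h Δt J hα hα2 hε hh hΔt hCFL
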